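/- arXiv:2211.00334 — 4 statements merged into one kernel-verified Lean document; each statement's English description precedes it below -/
import Mathlib

section
/- Let A be a finite-dimensional commutative algebra over a field F, V an F-vector space, θ : A × A → V a bilinear map, x ∈ A with L_x diagonalizable, and v ∈ V. If the kernel of L_x is contained in { y ∈ A : θ(x,y) = 0 }, then the left multiplication operator by x+v on A_θ is diagonalizable. -/
/-!
The operator `(a, w) ↦ (f a, g a)` kills `0 × N`, so it suffices to reach every `(a, 0)` with `a`
an eigenvector of `f`. For a nonzero eigenvalue `μ`, the vector `(a, μ⁻¹ • g a)` is a `μ`-eigenvector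
and differs from `(a, 0)` by an element of `0 × N`; for `μ = 0`, `(a, 0)` is already in the kernel
because `ker f ≤ ker g`.
-/

open Module End LinearMap

section CentralExtension

variable {K M N : Type*} [Field K] [AddCommGroup M] [Module K M] [AddCommGroup N] [Module K N]

/-- Left multiplication by `x + v` on `A_θ = A ⊕ V`, with `f = L_x` and `g = θ(x, ·)`; `v` does not
appear since `V` multiplies everything to zero in `A_θ`. -/
def centralExtensionEnd (f : End K M) (g : M →ₗ[K] N) : End K (M × N) :=
  (f ∘ₗ fst K M N).prod (g ∘ₗ fst K M N)

@[simp]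
lemma centralExtensionEnd_apply (f : End K M) (g : M →ₗ[K] N) (p : M × N) :
    centralExtensionEnd f g p = (f p.1, g p.1) :=
  rfl

variable {f : End K M} {g : M →ₗ[K] N}

lemma range_inr_le_eigenspace_centralExtensionEnd_zero :
    range (inr K M N) ≤ eigenspace (centralExtensionEnd f g) 0 := by
  rintro _ ⟨w, rfl⟩
  simp

lemma map_inl_eigenspace_le_iSup_eigenspace_centralExtensionEnd
    (hker : ker f ≤ ker g) (μ : K) :
    (eigenspace f μ).map (inl K M N) ≤ ⨆ ν, eigenspace (centralExtensionEnd f g) ν := by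
  rw [Submodule.map_le_iff_le_comap]
  intro a ha
  rw [mem_eigenspace_iff] at ha
  rcases eq_or_ne μ 0 with rfl | hμ
  · have hga : g a = 0 := hker (by simpa using ha)
    exact Submodule.mem_iSup_of_mem 0 (by simp [ha, hga])
  · have h_eigen : (a, μ⁻¹ • g a) ∈ eigenspace (centralExtensionEnd f g) μ := by
      simp [ha, smul_smul, mul_inv_cancel₀ hμ]
    have h_inr : ((0 : M), μ⁻¹ • g a) ∈ ⨆ ν, eigenspace (centralExtensionEnd f g) ν :=
      le_iSup (fun ν ↦ eigenspace (centralExtensionEnd f g) ν) 0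
        (range_inr_le_eigenspace_centralExtensionEnd_zero ⟨_, rfl⟩)
    simpa using Submodule.sub_mem _ (Submodule.mem_iSup_of_mem μ h_eigen) h_inr

theorem iSup_eigenspace_centralExtensionEnd_eq_top
    (hf : ⨆ μ, eigenspace f μ = ⊤) (hker : ker f ≤ ker g) :
    ⨆ μ, eigenspace (centralExtensionEnd f g) μ = ⊤ := by
  have h_inl : range (inl K M N) ≤ ⨆ μ, eigenspace (centralExtensionEnd f g) μ := by
    rw [range_eq_map, ← hf, Submodule.map_iSup]
    exact iSup_le (map_inl_eigenspace_le_iSup_eigenspace_centralExtensionEnd hker)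
  have h_inr : range (inr K M N) ≤ ⨆ μ, eigenspace (centralExtensionEnd f g) μ :=
    range_inr_le_eigenspace_centralExtensionEnd_zero.trans (le_iSup _ 0)
  rw [eq_top_iff, ← sup_range_inl_inr]
  exact sup_le h_inl h_inr

end CentralExtension

theorem stmt_4_general {F A V : Type*} [Field F] [AddCommGroup A] [Module F A]
    [AddCommGroup V] [Module F V]
    (mul : A →ₗ[F] A →ₗ[F] A)
    (θ : A →ₗ[F] A →ₗ[F] V) (x : A)
    (hdiag : (⨆ μ : F, Module.End.eigenspace (mul x) μ) = ⊤)
    (hker : ∀ y : A, mul x y = 0 → θ x y = 0) :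
    (⨆ μ : F, Module.End.eigenspace
        (((mul x).comp (LinearMap.fst F A V)).prod
          ((θ x).comp (LinearMap.fst F A V))) μ) = ⊤ :=
  iSup_eigenspace_centralExtensionEnd_eq_top hdiag fun y ↦ hker y

/-- if `L_x` is diagonalisable and `ker L_x ⊆ θ_x^⊥`, then left
multiplication by `x + v` on the central extension `A_θ` is diagonalisable. -/
theorem stmt_4 {F A V : Type*} [Field F] [AddCommGroup A] [Module F A]
    [FiniteDimensional F A] [AddCommGroup V] [Module F V]
    (mul : A →ₗ[F] A →ₗ[F] A) (hcomm : ∀ x y : A, mul x y = mul y x)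
    (θ : A →ₗ[F] A →ₗ[F] V) (x : A) (v : V)
    (hdiag : (⨆ μ : F, Module.End.eigenspace (mul x) μ) = ⊤)
    (hker : ∀ y : A, mul x y = 0 → θ x y = 0) :
    (⨆ μ : F, Module.End.eigenspace
        (((mul x).comp (LinearMap.fst F A V)).prod
          ((θ x).comp (LinearMap.fst F A V))) μ) = ⊤ :=
  stmt_4_general mul θ x hdiag hker
end

section
/- Let A be a finite-dimensional commutative algebra over a field F, V a finite-dimensional F-vector space, θ : A × A → V a bilinear map, x ∈ A and v ∈ V. If the left multiplication operator by x+v on A_θ is diagonalizable, then L_x is diagonalizable and ker L_x ⊆ { y ∈ A : θ(x,y) = 0 }. -/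
/-!
On `A_θ = A × V`, left multiplication by `x + v` is `T (a, w) = (x a, θ x a)`. The projection
`A × V → A` intertwines `T` with `L_x`, so `T`-eigenvectors project to `L_x`-eigenvectors and
diagonalisability passes to `L_x`. For `y ∈ ker L_x`, the vector `T (y, 0) = (0, θ x y)` lies both in
the range and in the kernel of `T`, and these meet trivially for a diagonalisable operator.
-/

namespace Module.End

variable {R M : Type*} [CommRing R] [AddCommGroup M] [Module R M]

theorem map_eigenspace_le_of_comp_eq {M' : Type*} [AddCommGroup M'] [Module R M']
    {T : End R M} {f : End R M'} {p : M →ₗ[R] M'} (hpT : p ∘ₗ T = f ∘ₗ p) (μ : R) :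
    (T.eigenspace μ).map p ≤ f.eigenspace μ := by
  rintro _ ⟨w, hw, rfl⟩
  rw [SetLike.mem_coe, mem_eigenspace_iff] at hw
  rw [mem_eigenspace_iff, ← LinearMap.comp_apply, ← hpT, LinearMap.comp_apply, hw, map_smul]

theorem iSup_eigenspace_eq_top_of_comp_eq {M' : Type*} [AddCommGroup M'] [Module R M']
    {T : End R M} {f : End R M'} {p : M →ₗ[R] M'} (hp : Function.Surjective p)
    (hpT : p ∘ₗ T = f ∘ₗ p) (hT : ⨆ μ, T.eigenspace μ = ⊤) :
    ⨆ μ, f.eigenspace μ = ⊤ := by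
  rw [← top_le_iff, ← LinearMap.range_eq_top.mpr hp, LinearMap.range_eq_map, ← hT,
    Submodule.map_iSup]
  exact iSup_mono (map_eigenspace_le_of_comp_eq hpT)

theorem range_le_iSup_eigenspace_ne_zero {T : End R M} (hT : ⨆ μ, T.eigenspace μ = ⊤) :
    LinearMap.range T ≤ ⨆ (μ : R) (_ : μ ≠ 0), T.eigenspace μ := by
  rw [LinearMap.range_eq_map, ← hT, Submodule.map_iSup, iSup_le_iff]
  rintro μ _ ⟨w, hw, rfl⟩
  rw [SetLike.mem_coe] at hw
  rw [mem_eigenspace_iff.mp hw]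
  rcases eq_or_ne μ 0 with rfl | hμ
  · rw [zero_smul]
    exact zero_mem _
  · exact Submodule.mem_iSup_of_mem μ <| Submodule.mem_iSup_of_mem hμ <|
      Submodule.smul_mem _ μ hw

theorem disjoint_ker_range_of_iSup_eigenspace_eq_top [IsDomain R] [IsTorsionFree R M]
    {T : End R M} (hT : ⨆ μ, T.eigenspace μ = ⊤) :
    Disjoint (LinearMap.ker T) (LinearMap.range T) := by
  rw [← eigenspace_zero]
  exact (T.eigenspaces_iSupIndep 0).mono_right (range_le_iSup_eigenspace_ne_zero hT)

end Module.End

theorem stmt_5_general {F A V : Type*} [Field F] [AddCommGroup A] [Module F A]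
    [AddCommGroup V] [Module F V]
    (mul : A →ₗ[F] A →ₗ[F] A)
    (θ : A →ₗ[F] A →ₗ[F] V) (x : A)
    (hdiag : (⨆ μ : F, Module.End.eigenspace
        (((mul x).comp (LinearMap.fst F A V)).prod
          ((θ x).comp (LinearMap.fst F A V))) μ) = ⊤) :
    (⨆ μ : F, Module.End.eigenspace (mul x) μ) = ⊤ ∧
      ∀ y : A, mul x y = 0 → θ x y = 0 := by
  set T : Module.End F (A × V) :=
    ((mul x).comp (LinearMap.fst F A V)).prod ((θ x).comp (LinearMap.fst F A V))
  refine ⟨Module.End.iSup_eigenspace_eq_top_of_comp_eq (T := T) (p := LinearMap.fst F A V)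
    Prod.fst_surjective rfl hdiag, fun y hy ↦ ?_⟩
  have hTy : T (y, 0) = (0, θ x y) := by simp [T, hy]
  have hker : ((0 : A), θ x y) ∈ LinearMap.ker T := by simp [T]
  have hzero := Submodule.disjoint_def.mp
    (Module.End.disjoint_ker_range_of_iSup_eigenspace_eq_top hdiag) _ hker (hTy ▸ ⟨_, rfl⟩)
  exact congrArg Prod.snd hzero

/-- if left multiplication by `x + v` on the central extension `A_θ`
is diagonalisable, then `L_x` is diagonalisable and `ker L_x ⊆ θ_x^⊥`. -/
theorem stmt_5 {F A V : Type*} [Field F] [AddCommGroup A] [Module F A]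
    [FiniteDimensional F A] [AddCommGroup V] [Module F V] [FiniteDimensional F V]
    (mul : A →ₗ[F] A →ₗ[F] A) (hcomm : ∀ x y : A, mul x y = mul y x)
    (θ : A →ₗ[F] A →ₗ[F] V) (x : A) (v : V)
    (hdiag : (⨆ μ : F, Module.End.eigenspace
        (((mul x).comp (LinearMap.fst F A V)).prod
          ((θ x).comp (LinearMap.fst F A V))) μ) = ⊤) :
    (⨆ μ : F, Module.End.eigenspace (mul x) μ) = ⊤ ∧
      ∀ y : A, mul x y = 0 → θ x y = 0 :=
  stmt_5_general mul θ x hdiag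
end

section
/- Let F be a field of characteristic not 2 and let J_n be the (n ≥ 1)-dimensional commutative algebra with basis {e, n_1, …, n_{n−1}} and products e·e = e, e·n_i = (1/2) n_i, n_i·n_j = 0. Then every symmetric bilinear map θ : J_n × J_n → V into a vector space V is a Jordan 2-cocycle, i.e., θ(xy, x²) = θ(x, y x²) for all x, y ∈ J_n; consequently every commutative central extension (J_n)_θ is a Jordan algebra. -/
/-!
Once `2` is invertible, the product of `J_{n+1}` is `x y = f(x) y + f(y) x` for the linear
functional `f = ½ e*`. For any such product, with `a = f x` and `b = f y`, one has `x² = 2a x`,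
and both sides of the Jordan identity expand to `6a²b x + 2a³ y`, while both sides of the
cocycle identity expand to `2a (a θ(x, y) + b θ(x, x))` once `θ` is symmetric.
-/

/-- The Jordan algebra `J_{n+1}` on basis `e = δ_0, n_1, …, n_n`:
`e² = e`, `e nᵢ = ½ nᵢ`, `nᵢ nⱼ = 0`. -/
def Jmul {F : Type*} [Field F] (n : ℕ) (x y : Fin (n + 1) → F) :
    Fin (n + 1) → F :=
  fun i => if i = 0 then x 0 * y 0 else (2 : F)⁻¹ * (x 0 * y i + x i * y 0)

namespace Module.Dual

variable {R M V : Type*} [CommRing R] [AddCommGroup M] [Module R M]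
  [AddCommGroup V] [Module R V]

def symmMul (f : Module.Dual R M) (x y : M) : M := f x • y + f y • x

variable (f : Module.Dual R M)

theorem symmMul_self (x : M) : f.symmMul x x = (2 * f x) • x := by
  rw [symmMul, ← add_smul, two_mul]

theorem symmMul_jordan (x y : M) :
    f.symmMul (f.symmMul x y) (f.symmMul x x) = f.symmMul x (f.symmMul y (f.symmMul x x)) := by
  rw [symmMul_self]
  simp only [symmMul, map_add, map_smul, smul_eq_mul]
  module

theorem symmMul_jordan_cocycle (θ : M →ₗ[R] M →ₗ[R] V) (hθ : ∀ x y, θ x y = θ y x)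
    (x y : M) :
    θ (f.symmMul x y) (f.symmMul x x) = θ x (f.symmMul y (f.symmMul x x)) := by
  simp only [symmMul, map_add, map_smul, LinearMap.add_apply,
    LinearMap.smul_apply, smul_eq_mul]
  rw [hθ y x]
  module

end Module.Dual

theorem Jmul_eq_symmMul {F : Type*} [Field F] (hchar : (2 : F) ≠ 0) (n : ℕ) :
    Jmul n = ((2 : F)⁻¹ • LinearMap.proj 0 : Module.Dual F (Fin (n + 1) → F)).symmMul := by
  ext x y i
  by_cases hi : i = 0
  · subst hi
    simp only [Jmul, Module.Dual.symmMul, if_true, Pi.add_apply, Pi.smul_apply,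
      LinearMap.smul_apply, LinearMap.coe_proj, Function.eval, smul_eq_mul]
    field_simp
    ring
  · simp only [Jmul, Module.Dual.symmMul, hi, if_false, Pi.add_apply, Pi.smul_apply,
      LinearMap.smul_apply, LinearMap.coe_proj, Function.eval, smul_eq_mul]
    ring

/-- over a field of characteristic not 2, every symmetric
bilinear map `θ : J_n × J_n → V` is a Jordan 2-cocycle, so every commutative
central extension `(J_n)_θ` is a Jordan algebra. -/
theorem stmt_15 {F V : Type*} [Field F] [AddCommGroup V] [Module F V]
    (hchar : (2 : F) ≠ 0) (n : ℕ)
    (θ : (Fin (n + 1) → F) →ₗ[F] (Fin (n + 1) → F) →ₗ[F] V)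
    (hsymm : ∀ x y : Fin (n + 1) → F, θ x y = θ y x) :
    (∀ x y : Fin (n + 1) → F,
      θ (Jmul n x y) (Jmul n x x) = θ x (Jmul n y (Jmul n x x))) ∧
    (∀ p q : (Fin (n + 1) → F) × V,
      ((Jmul n (Jmul n p.1 q.1) (Jmul n p.1 p.1),
        θ (Jmul n p.1 q.1) (Jmul n p.1 p.1)) : (Fin (n + 1) → F) × V) =
      (Jmul n p.1 (Jmul n q.1 (Jmul n p.1 p.1)),
        θ p.1 (Jmul n q.1 (Jmul n p.1 p.1)))) := by
  rw [Jmul_eq_symmMul hchar]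
  set f : Module.Dual F (Fin (n + 1) → F) := (2 : F)⁻¹ • LinearMap.proj 0
  have cocycle := f.symmMul_jordan_cocycle θ hsymm
  exact ⟨cocycle, fun p q => Prod.ext (f.symmMul_jordan p.1 q.1) (cocycle p.1 q.1)⟩
end

section
/- Let F be a field of characteristic not 2 and J_n the algebra with basis {e, n_1, …, n_{n−1}}, products e² = e, e n_i = (1/2) n_i, all other products zero. Then every idempotent of J_n is of the form e + Σ α_i n_i for scalars α_i, and for every such idempotent a, the 0-eigenspace of left multiplication by a on J_n is zero. -/
section Jmul

variable {F : Type*} [Field F] {n : ℕ} {x y : Fin (n + 1) → F}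

@[simp]
lemma Jmul_apply_zero : Jmul n x y 0 = x 0 * y 0 := if_pos rfl

lemma Jmul_apply_of_ne_zero {i : Fin (n + 1)} (hi : i ≠ 0) :
    Jmul n x y i = (2 : F)⁻¹ * (x 0 * y i + x i * y 0) := if_neg hi

lemma Jmul_self_eq_zero_of_apply_zero (hx : x 0 = 0) : Jmul n x x = 0 := by
  funext i
  rcases eq_or_ne i 0 with rfl | hi
  · simp [hx]
  · simp [Jmul_apply_of_ne_zero hi, hx]

lemma apply_zero_eq_one_of_Jmul_self (hx : Jmul n x x = x) (hx0 : x ≠ 0) : x 0 = 1 := by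
  have hsq : x 0 * x 0 = x 0 := by simpa using congrFun hx 0
  rcases IsIdempotentElem.iff_eq_zero_or_one.mp hsq with hzero | hone
  · exact absurd (hx.symm.trans (Jmul_self_eq_zero_of_apply_zero hzero)) hx0
  · exact hone

lemma eq_zero_of_Jmul_eq_zero (hchar : (2 : F) ≠ 0) (hx : x 0 ≠ 0) (hxy : Jmul n x y = 0) :
    y = 0 := by
  have hy0 : y 0 = 0 := by
    simpa [hx] using congrFun hxy 0
  funext i
  rcases eq_or_ne i 0 with rfl | hi
  · exact hy0
  · have hyi := congrFun hxy i
    simp only [Jmul_apply_of_ne_zero hi, hy0, mul_zero, add_zero, Pi.zero_apply] at hyi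
    simpa [hchar, hx] using hyi

end Jmul

/-- over a field of characteristic not 2, every nonzero
idempotent of `J_n` has the form `e + Σ αᵢ nᵢ` (i.e. its `e`-coordinate is 1),
and for every such idempotent `a`, the 0-eigenspace of `L_a` is zero. -/
theorem stmt_16 {F : Type*} [Field F] (hchar : (2 : F) ≠ 0) (n : ℕ) :
    (∀ a : Fin (n + 1) → F, Jmul n a a = a → a ≠ 0 → a 0 = 1) ∧
    (∀ a : Fin (n + 1) → F, Jmul n a a = a → a ≠ 0 →
      ∀ y : Fin (n + 1) → F, Jmul n a y = 0 → y = 0) :=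
  ⟨fun _ ha ha0 => apply_zero_eq_one_of_Jmul_self ha ha0,
    fun _ ha ha0 _ hay => eq_zero_of_Jmul_eq_zero hchar
      (by simp [apply_zero_eq_one_of_Jmul_self ha ha0]) hay⟩
end
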